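/- Let u(x,y) = a(x²−y²) with a ∈ R and r > 0. Then sup_{z ∈ B_r} ‖∇u(z)‖ ≤ √2 · sup_{p,q ∈ ∂B_r, p≠q} |u(p)-u(q)|/|p-q|, where B_r is the closed ball of radius r centered at the origin in R². -/

import Mathlib

/-!
On the closed ball the gradient `(2ax, -2ay)` of `u = a(x² - y²)` has norm at most `2|a|r`,
while the boundary points `(r, 0)` and `(0, r)`, at distance `√2 r`, have `|u p - u q| = 2|a|r²`;
so the boundary difference quotients reach `√2 |a| r`, and `√2 · √2 |a| r = 2|a|r`.
-/

namespace HyperbolicQuadratic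

lemma sqrt_gradient_sq_le {a r x y : ℝ} (hr : 0 ≤ r) (hxy : x ^ 2 + y ^ 2 ≤ r ^ 2) :
    √((2 * a * x) ^ 2 + (-(2 * a * y)) ^ 2) ≤ 2 * |a| * r := by
  rw [Real.sqrt_le_iff]
  refine ⟨by positivity, ?_⟩
  nlinarith [sq_abs a, sq_nonneg a]

lemma abs_sub_le_mul_dist_of_mem_sphere {a r : ℝ} (hr : 0 ≤ r) {p q : ℝ × ℝ}
    (hp : p.1 ^ 2 + p.2 ^ 2 = r ^ 2) (hq : q.1 ^ 2 + q.2 ^ 2 = r ^ 2) :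
    |a * (p.1 ^ 2 - p.2 ^ 2) - a * (q.1 ^ 2 - q.2 ^ 2)| ≤
      2 * |a| * r * √((p.1 - q.1) ^ 2 + (p.2 - q.2) ^ 2) := by
  rw [← Real.sqrt_sq (by positivity : 0 ≤ 2 * |a| * r), ← Real.sqrt_mul (by positivity)]
  apply Real.abs_le_sqrt
  set d := (p.1 - q.1) ^ 2 + (p.2 - q.2) ^ 2
  -- `u p - u q = a ⟪p - q, (p.1 + q.1, -(p.2 + q.2))⟫`, and `‖p + q‖² = 4r² - ‖p - q‖²`
  have cauchy_schwarz :
      ((p.1 - q.1) * (p.1 + q.1) - (p.2 - q.2) * (p.2 + q.2)) ^ 2 ≤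
        d * ((p.1 + q.1) ^ 2 + (p.2 + q.2) ^ 2) := by
    nlinarith [sq_nonneg ((p.1 - q.1) * (p.2 + q.2) + (p.2 - q.2) * (p.1 + q.1))]
  have norm_add_sq_le : (p.1 + q.1) ^ 2 + (p.2 + q.2) ^ 2 ≤ 4 * r ^ 2 := by
    nlinarith [sq_nonneg (p.1 - q.1), sq_nonneg (p.2 - q.2)]
  calc (a * (p.1 ^ 2 - p.2 ^ 2) - a * (q.1 ^ 2 - q.2 ^ 2)) ^ 2
      = a ^ 2 * ((p.1 - q.1) * (p.1 + q.1) - (p.2 - q.2) * (p.2 + q.2)) ^ 2 := by ring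
    _ ≤ a ^ 2 * (d * (4 * r ^ 2)) := by
        gcongr
        exact cauchy_schwarz.trans (by gcongr)
    _ = (2 * |a| * r) ^ 2 * d := by rw [mul_pow, mul_pow, sq_abs]; ring

lemma bddAbove_boundary_quotients (a : ℝ) {r : ℝ} (hr : 0 ≤ r) :
    BddAbove {s : ℝ | ∃ p q : ℝ × ℝ,
      p.1 ^ 2 + p.2 ^ 2 = r ^ 2 ∧ q.1 ^ 2 + q.2 ^ 2 = r ^ 2 ∧ p ≠ q ∧
      s = |a * (p.1 ^ 2 - p.2 ^ 2) - a * (q.1 ^ 2 - q.2 ^ 2)| /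
        √((p.1 - q.1) ^ 2 + (p.2 - q.2) ^ 2)} := by
  refine ⟨2 * |a| * r, ?_⟩
  rintro s ⟨p, q, hp, hq, -, rfl⟩
  exact div_le_of_le_mul₀ (Real.sqrt_nonneg _) (by positivity)
    (abs_sub_le_mul_dist_of_mem_sphere hr hp hq)

lemma sqrt_two_mul_mem_boundary_quotients (a : ℝ) {r : ℝ} (hr : 0 < r) :
    √2 * |a| * r ∈ {s : ℝ | ∃ p q : ℝ × ℝ,
      p.1 ^ 2 + p.2 ^ 2 = r ^ 2 ∧ q.1 ^ 2 + q.2 ^ 2 = r ^ 2 ∧ p ≠ q ∧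
      s = |a * (p.1 ^ 2 - p.2 ^ 2) - a * (q.1 ^ 2 - q.2 ^ 2)| /
        √((p.1 - q.1) ^ 2 + (p.2 - q.2) ^ 2)} := by
  refine ⟨(r, 0), (0, r), by simp, by simp, by simp [hr.ne'], ?_⟩
  have hdist : √((r - 0) ^ 2 + (0 - r) ^ 2) = √2 * r := by
    rw [show (r - 0) ^ 2 + (0 - r) ^ 2 = 2 * r ^ 2 by ring, Real.sqrt_mul zero_le_two,
      Real.sqrt_sq hr.le]
  have hdiff : |a * (r ^ 2 - 0 ^ 2) - a * (0 ^ 2 - r ^ 2)| = √2 * |a| * r * (√2 * r) := by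
    rw [show a * (r ^ 2 - 0 ^ 2) - a * (0 ^ 2 - r ^ 2) = 2 * r ^ 2 * a by ring, abs_mul,
      abs_of_pos (by positivity : 0 < 2 * r ^ 2)]
    linear_combination (-(|a| * r ^ 2)) * Real.mul_self_sqrt zero_le_two
  rw [hdist, hdiff, mul_div_cancel_right₀ _ (by positivity)]

end HyperbolicQuadratic

open HyperbolicQuadratic in
/-- u(x,y)=a(x²−y²) is gradually varied semi-preserving with constant √2 on the closed
ball of radius r: the sup of the gradient norm over the ball is at most √2 times the sup
of boundary difference quotients over distinct boundary points. -/
theorem stmt_10 (a r : ℝ) (hr : 0 < r) (u : ℝ × ℝ → ℝ)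
    (hu : ∀ p : ℝ × ℝ, u p = a * (p.1 ^ 2 - p.2 ^ 2)) :
    sSup {g : ℝ | ∃ x y : ℝ, x ^ 2 + y ^ 2 ≤ r ^ 2 ∧
        g = Real.sqrt ((2 * a * x) ^ 2 + (-(2 * a * y)) ^ 2)} ≤
      Real.sqrt 2 * sSup {s : ℝ | ∃ p q : ℝ × ℝ,
        p.1 ^ 2 + p.2 ^ 2 = r ^ 2 ∧ q.1 ^ 2 + q.2 ^ 2 = r ^ 2 ∧ p ≠ q ∧
        s = |u p - u q| / Real.sqrt ((p.1 - q.1) ^ 2 + (p.2 - q.2) ^ 2)} := by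
  simp only [hu]
  calc _ ≤ 2 * |a| * r := by
          refine Real.sSup_le ?_ (by positivity)
          rintro g ⟨x, y, hxy, rfl⟩
          exact sqrt_gradient_sq_le hr.le hxy
    _ = √2 * (√2 * |a| * r) := by
          rw [← mul_assoc, ← mul_assoc, Real.mul_self_sqrt zero_le_two]
    _ ≤ _ := by
          gcongr
          exact le_csSup (bddAbove_boundary_quotients a hr.le)
            (sqrt_two_mul_mem_boundary_quotients a hr)
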